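/- Let G be a finitely generated group in which every maximal subgroup is normal, let π: G → G/[G,G] be the natural projection, and let s₁,...,sₙ ∈ G be elements such that π(s₁),...,π(sₙ) generate G/[G,G]. Then s₁,...,sₙ generate G. -/

import Mathlib

/-!
A normal maximal subgroup `M` has a quotient with no proper nontrivial subgroups, hence cyclic,
hence abelian; so `M` contains `[G, G]`. If every maximal subgroup is normal, `[G, G]` therefore
lies in the Frattini subgroup. Lifts of generators of the abelianization generate `G` modulo
`[G, G]`, hence modulo the Frattini subgroup, and in a finitely generated group (where every proper
subgroup lies in a maximal one) the Frattini subgroup consists of non-generators.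
-/

open CompleteLattice

namespace Subgroup

variable {G : Type*} [Group G]

theorem isCompactElement_zpowers (g : G) : IsCompactElement (zpowers g) := by
  rw [isCompactElement_iff_le_of_directed_sSup_le]
  intro d hne hdir hle
  obtain ⟨K, hK, hgK⟩ := (mem_sSup_of_directedOn hne hdir).mp (hle (mem_zpowers g))
  exact ⟨K, hK, zpowers_le.mpr hgK⟩

theorem isCompactElement_closure_finset (T : Finset G) :
    IsCompactElement (closure (T : Set G)) := by
  have : closure (T : Set G) = T.sup zpowers := by
    rw [Finset.sup_eq_iSup, ← Set.biUnion_of_singleton (T : Set G)]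
    simp only [closure_iUnion, zpowers_eq_closure, Finset.mem_coe]
  exact this ▸ isCompactElement_finsetSup T fun g _ ↦ isCompactElement_zpowers g

instance isCoatomic_of_fg [Group.FG G] : IsCoatomic (Subgroup G) := by
  obtain ⟨T, hT⟩ := Group.FG.out (G := G)
  exact coatomic_of_top_compact (hT ▸ isCompactElement_closure_finset T)

theorem isCyclic_quotient_of_isCoatom {M : Subgroup G} [M.Normal] (hM : IsCoatom M) :
    IsCyclic (G ⧸ M) := by
  obtain ⟨x, -, hxM⟩ := SetLike.exists_of_lt hM.lt_top
  refine isCyclic_iff_exists_zpowers_eq_top.mpr ⟨x, ?_⟩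
  have hlt : M < (zpowers (x : G ⧸ M)).comap (QuotientGroup.mk' M) := by
    refine SetLike.lt_iff_le_and_exists.mpr ⟨fun m hm ↦ ?_, x, ?_, hxM⟩
    · simp [(QuotientGroup.eq_one_iff m).mpr hm]
    · simp [mem_zpowers]
  rw [← map_comap_eq_self_of_surjective (QuotientGroup.mk'_surjective M) (zpowers _),
    hM.2 _ hlt, ← MonoidHom.range_eq_map, MonoidHom.range_eq_top_of_surjective _
      (QuotientGroup.mk'_surjective M)]

end Subgroup

section Commutator

variable {G : Type*} [Group G]

theorem commutator_le_of_isCoatom {M : Subgroup G} [M.Normal] (hM : IsCoatom M) :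
    commutator G ≤ M := by
  have := Subgroup.isCyclic_quotient_of_isCoatom hM
  let := IsCyclic.commGroup (α := G ⧸ M)
  simpa using Abelianization.commutator_subset_ker (QuotientGroup.mk' M)

theorem sup_commutator_eq_top_of_map_abelianization_eq_top {H : Subgroup G}
    (hH : H.map Abelianization.of = ⊤) : H ⊔ commutator G = ⊤ := by
  rw [← Abelianization.ker_of, ← Subgroup.comap_map_eq, hH, Subgroup.comap_top]

theorem commutator_le_frattini_of_forall_isCoatom_normal
    (hmax : ∀ M : Subgroup G, IsCoatom M → M.Normal) : commutator G ≤ frattini G :=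
  le_iInf₂ fun M hM ↦ have := hmax M hM; commutator_le_of_isCoatom hM

end Commutator

/-- In a finitely generated group where every maximal subgroup is normal, elements
whose images generate the abelianization generate the whole group. -/
theorem stmt_4 {G : Type*} [Group G] (hfg : Group.FG G)
    (hmax : ∀ M : Subgroup G, IsCoatom M → M.Normal)
    (n : ℕ) (s : Fin n → G)
    (hgen : Subgroup.closure (Set.range fun i => Abelianization.of (s i)) = ⊤) :
    Subgroup.closure (Set.range s) = ⊤ := by
  have hmap : (Subgroup.closure (Set.range s)).map Abelianization.of = ⊤ := by
    rw [MonoidHom.map_closure, ← Set.range_comp, ← hgen]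
    rfl
  refine frattini_nongenerating (top_le_iff.mp ?_)
  calc ⊤ = Subgroup.closure (Set.range s) ⊔ commutator G :=
        (sup_commutator_eq_top_of_map_abelianization_eq_top hmap).symm
    _ ≤ Subgroup.closure (Set.range s) ⊔ frattini G :=
        sup_le_sup_left (commutator_le_frattini_of_forall_isCoatom_normal hmax) _
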